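/- Let L0 ⊆ L ⊆ Lexp be logics in the given signature such that {⊥} ⊢_{L0} p for some atom p, and suppose Lexp is an explosive extension of L, i.e. for all Γ and φ: Γ ⊢_{Lexp} φ if and only if Γ ⊢_L φ or Γ ⊢_{Lexp} ⊥. If L enjoys interpolation, then Lexp enjoys interpolation; and if L enjoys (L, L0)-interpolation, then Lexp enjoys (Lexp, L0)-interpolation. -/
import Mathlib


/-- Propositional formulas: atoms, conjunction, disjunction, De Morgan negation, ⊤, ⊥. -/
inductive Fm : Type where
  | atom : ℕ → Fm
  | conj : Fm → Fm → Fm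
  | disj : Fm → Fm → Fm
  | neg  : Fm → Fm
  | top  : Fm
  | bot  : Fm
deriving DecidableEq

/-- The atom `i` occurs in a formula. -/
def occurs (i : ℕ) : Fm → Prop
  | .atom j => i = j
  | .conj φ ψ => occurs i φ ∨ occurs i ψ
  | .disj φ ψ => occurs i φ ∨ occurs i ψ
  | .neg φ => occurs i φ
  | .top => False
  | .bot => False

/-- Extension of a substitution (a map from atoms to formulas) to the unique
endomorphism of the formula algebra. -/
def fsubst (σ : ℕ → Fm) : Fm → Fm
  | .atom j => σ j
  | .conj φ ψ => .conj (fsubst σ φ) (fsubst σ ψ)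
  | .disj φ ψ => .disj (fsubst σ φ) (fsubst σ ψ)
  | .neg φ => .neg (fsubst σ φ)
  | .top => .top
  | .bot => .bot

/-- A logic (Hilbert relation): reflexive, monotone, satisfying cut and structurality. -/
structure IsLogic (L : Set Fm → Fm → Prop) : Prop where
  refl : ∀ φ : Fm, L {φ} φ
  mono : ∀ (Γ Δ : Set Fm) (φ : Fm), L Γ φ → L (Γ ∪ Δ) φ
  cut : ∀ (Γ Φ Δ : Set Fm) (ψ : Fm), (∀ φ ∈ Φ, L Γ φ) → L (Φ ∪ Δ) ψ → L (Γ ∪ Δ) ψ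
  structural : ∀ (Γ : Set Fm) (φ : Fm) (σ : ℕ → Fm), L Γ φ → L (fsubst σ '' Γ) (fsubst σ φ)

/-- `L` enjoys (L1, L2)-interpolation: whenever `φ ⊢_L ψ` there is an interpolant `χ`,
all of whose atoms occur in both `φ` and `ψ`, with `φ ⊢_{L1} χ` and `χ ⊢_{L2} ψ`. -/
def Interp (L1 L2 L : Set Fm → Fm → Prop) : Prop :=
  ∀ φ ψ : Fm, L {φ} ψ →
    ∃ χ : Fm, (∀ i, occurs i χ → occurs i φ ∧ occurs i ψ) ∧ L1 {φ} χ ∧ L2 {χ} ψ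

/-- If L0 ⊆ L ⊆ Lexp are logics with ⊥ ⊢_{L0} p for some atom p and Lexp an explosive
extension of L, then interpolation for L transfers to Lexp, and (L, L0)-interpolation
for L yields (Lexp, L0)-interpolation for Lexp. -/
theorem stmt14 (L0 L Lexp : Set Fm → Fm → Prop)
    (hL0 : IsLogic L0) (hL : IsLogic L) (hLexp : IsLogic Lexp)
    (hsub0 : ∀ Γ φ, L0 Γ φ → L Γ φ)
    (hsub : ∀ Γ φ, L Γ φ → Lexp Γ φ)
    (hbot : ∃ p : ℕ, L0 {Fm.bot} (Fm.atom p))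
    (hexp : ∀ Γ φ, Lexp Γ φ ↔ (L Γ φ ∨ Lexp Γ Fm.bot)) :
    (Interp L L L → Interp Lexp Lexp Lexp) ∧
    (Interp L L0 L → Interp Lexp L0 Lexp) := by
  obtain ⟨p, hp⟩ := hbot
  have hbotψ : ∀ ψ : Fm, L0 {Fm.bot} ψ := by
    intro ψ
    have := hL0.structural {Fm.bot} (Fm.atom p) (fun _ => ψ) hp
    simpa [fsubst, Set.image_singleton] using this
  constructor
  · intro hI φ ψ h
    rcases (hexp {φ} ψ).1 h with h1 | h2
    · obtain ⟨χ, hocc, h1, h2⟩ := hI φ ψ h1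
      exact ⟨χ, hocc, hsub _ _ h1, hsub _ _ h2⟩
    · exact ⟨Fm.bot, fun i hi => hi.elim, h2, hsub _ _ (hsub0 _ _ (hbotψ ψ))⟩
  · intro hI φ ψ h
    rcases (hexp {φ} ψ).1 h with h1 | h2
    · obtain ⟨χ, hocc, h1, h2⟩ := hI φ ψ h1
      exact ⟨χ, hocc, hsub _ _ h1, h2⟩
    · exact ⟨Fm.bot, fun i hi => hi.elim, h2, hbotψ ψ⟩
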